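/- Let m > 3/2 and K > 0 be real constants, let h : [0,∞) → ℝ be continuous with |h(r)| ≤ K e^{(2−m)r} for all r ≥ 0, and let f : [0,∞) → ℝ be a C² function satisfying f''(r) − (1/4) f(r) = h(r) for all r ≥ 0. Then the quantity α := (1/2)f(0) + f'(0) + ∫₀^∞ e^{-s/2} h(s) ds is well defined (the integral converges absolutely), and there exists a constant c > 0 depending only on K, m, |f(0)| and |f'(0)| such that for all r ≥ 0: |f(r) − α e^{r/2}| ≤ c·ρ(r), where ρ(r) = e^{(2−m)r} if 3/2 < m < 5/2, ρ(r) = (r+1)e^{-r/2} if m = 5/2, and ρ(r) = e^{-r/2} if m > 5/2. -/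

import Mathlib

/-!
Two integrating factors. Since `(e^{-s/2} (f' + f/2))' = e^{-s/2} (f'' - f/4) = e^{-s/2} h`,
integrating from `0` gives `e^{-s/2} (f' + f/2) = α - R(s)`, where the tail
`R(s) = ∫_s^∞ e^{-t/2} h(t) dt` is `O(e^{-(m - 3/2) s})`. Then
`(e^{r/2} f)' = e^{r/2} (f' + f/2) = α e^r - e^r R`, so
`f(r) - α e^{r/2} = e^{-r/2} (f(0) - α - ∫_0^r e^s R(s) ds)`, and the last integral is
`O(∫_0^r e^{(5/2 - m) s} ds)`; the sign of this exponent gives the three regimes of the rate.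
-/

open Real MeasureTheory Set

section ExponentialDecay

variable {E : Type*} [NormedAddCommGroup E] {φ : ℝ → E} {a K s : ℝ}

lemma integrableOn_Ioi_of_norm_le_exp (ha : 0 < a)
    (hφ : AEStronglyMeasurable φ (volume.restrict (Ioi s)))
    (hbound : ∀ t > s, ‖φ t‖ ≤ K * exp (-a * t)) :
    IntegrableOn φ (Ioi s) :=
  ((exp_neg_integrableOn_Ioi s ha).const_mul K).mono' hφ
    (ae_restrict_of_forall_mem measurableSet_Ioi hbound)

lemma norm_integral_Ioi_le_of_norm_le_exp [NormedSpace ℝ E] (ha : 0 < a)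
    (hbound : ∀ t > s, ‖φ t‖ ≤ K * exp (-a * t)) :
    ‖∫ t in Ioi s, φ t‖ ≤ K / a * exp (-a * s) := by
  refine (norm_integral_le_of_norm_le ((exp_neg_integrableOn_Ioi s ha).const_mul K)
    (ae_restrict_of_forall_mem measurableSet_Ioi hbound)).trans_eq ?_
  rw [integral_const_mul, integral_exp_mul_Ioi (by linarith)]
  ring

end ExponentialDecay

lemma integral_exp_mul {b : ℝ} (hb : b ≠ 0) (r : ℝ) :
    ∫ s in (0 : ℝ)..r, exp (b * s) = (exp (b * r) - 1) / b := by
  rw [intervalIntegral.integral_comp_mul_left (fun s => exp s) hb, integral_exp, mul_zero,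
    exp_zero, smul_eq_mul, inv_mul_eq_div]

lemma exp_mul_sub_eq_integral {G G' : ℝ → ℝ} (hG : ∀ s, HasDerivAt G (G' s) s)
    (hG' : Continuous G') (c r : ℝ) :
    exp (c * r) * G r - G 0 = ∫ s in (0 : ℝ)..r, exp (c * s) * (G' s + c * G s) := by
  have hGc : Continuous G := continuous_iff_continuousAt.2 fun s => (hG s).continuousAt
  rw [intervalIntegral.integral_eq_sub_of_hasDerivAt (f := fun s => exp (c * s) * G s)
    (fun s _ => ?_) (Continuous.intervalIntegrable (by fun_prop) _ _)]
  · simp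
  · exact (((hasDerivAt_id s).const_mul c).exp.mul (hG s)).congr_deriv
      (by simp only [id, mul_one]; ring)

noncomputable def decayRate (m r : ℝ) : ℝ :=
  if m < 5 / 2 then exp ((2 - m) * r)
  else if m = 5 / 2 then (r + 1) * exp (-r / 2)
  else exp (-r / 2)

lemma exp_neg_half_le_decayRate (m : ℝ) {r : ℝ} (hr : 0 ≤ r) :
    exp (-r / 2) ≤ decayRate m r := by
  unfold decayRate
  split_ifs with h1 h2
  · exact exp_le_exp.2 (by nlinarith)
  · exact le_mul_of_one_le_left (exp_pos _).le (by linarith)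
  · exact le_rfl

lemma exists_exp_neg_half_mul_integral_exp_le_decayRate (m : ℝ) :
    ∃ D > 0, ∀ r ≥ 0,
      exp (-r / 2) * ∫ s in (0 : ℝ)..r, exp ((5 / 2 - m) * s) ≤ D * decayRate m r := by
  rcases lt_trichotomy m (5 / 2) with hm | rfl | hm
  · refine ⟨(5 / 2 - m)⁻¹, by simp [hm], fun r hr => ?_⟩
    rw [decayRate, if_pos hm, integral_exp_mul (by linarith)]
    have hb : 0 < 5 / 2 - m := by linarith
    calc exp (-r / 2) * ((exp ((5 / 2 - m) * r) - 1) / (5 / 2 - m))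
        ≤ exp (-r / 2) * (exp ((5 / 2 - m) * r) / (5 / 2 - m)) := by gcongr; linarith
      _ = (5 / 2 - m)⁻¹ * exp ((2 - m) * r) := by
        rw [← mul_div_assoc, ← exp_add, inv_mul_eq_div]; congr 2; ring
  · refine ⟨1, one_pos, fun r hr => ?_⟩
    simp only [decayRate, lt_irrefl, if_false, if_true, sub_self, zero_mul, exp_zero,
      intervalIntegral.integral_const, sub_zero, smul_eq_mul, mul_one, one_mul]
    nlinarith [exp_pos (-r / 2)]
  · refine ⟨(m - 5 / 2)⁻¹, by simp [hm], fun r hr => ?_⟩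
    rw [decayRate, if_neg (by linarith), if_neg (by linarith), integral_exp_mul (by linarith)]
    have hb : 0 < m - 5 / 2 := by linarith
    have : (exp ((5 / 2 - m) * r) - 1) / (5 / 2 - m) ≤ (m - 5 / 2)⁻¹ := by
      rw [div_eq_mul_inv, show 5 / 2 - m = -(m - 5 / 2) by ring, inv_neg]
      nlinarith [mul_pos (exp_pos (-(m - 5 / 2) * r)) (inv_pos.2 hb)]
    rw [mul_comm]
    exact mul_le_mul_of_nonneg_right this (exp_pos _).le

noncomputable def asymptoticCoeff (f h : ℝ → ℝ) : ℝ :=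
  1 / 2 * f 0 + deriv f 0 + ∫ s in Ici (0 : ℝ), exp (-s / 2) * h s

section SecondOrderEquation

variable {f h : ℝ → ℝ}

lemma sub_mul_exp_half_eq (hf : ContDiff ℝ 1 f) (α r : ℝ) :
    f r - α * exp (r / 2) = exp (-r / 2) *
      (f 0 - α + ∫ s in (0 : ℝ)..r, (exp (s / 2) * (deriv f s + f s / 2) - α * exp s)) := by
  have hftc := exp_mul_sub_eq_integral (fun s => (hf.differentiable one_ne_zero s).hasDerivAt)
    (hf.continuous_deriv le_rfl) (1 / 2) r
  rw [intervalIntegral.integral_sub (Continuous.intervalIntegrable (by fun_prop) _ _)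
    (Continuous.intervalIntegrable (by fun_prop) _ _), intervalIntegral.integral_const_mul,
    integral_exp, exp_zero]
  simp only [one_div, inv_mul_eq_div] at hftc
  have hinv : exp (-r / 2) * exp (r / 2) = 1 := by
    rw [← exp_add, neg_div, neg_add_cancel, exp_zero]
  have hhalf : exp (-r / 2) * exp r = exp (r / 2) := by rw [← exp_add]; ring_nf
  rw [← hftc]
  linear_combination (-f r) * hinv + α * hhalf

lemma exp_neg_half_mul_deriv_add_half_eq (hf : ContDiff ℝ 2 f)
    (hode : ∀ r ≥ 0, deriv (deriv f) r - 1 / 4 * f r = h r)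
    (hφ : IntegrableOn (fun t => exp (-t / 2) * h t) (Ioi 0)) {s : ℝ} (hs : 0 ≤ s) :
    exp (-s / 2) * (deriv f s + f s / 2) =
      asymptoticCoeff f h - ∫ t in Ioi s, exp (-t / 2) * h t := by
  have hf' : ContDiff ℝ 1 (deriv f) := (contDiff_succ_iff_deriv (n := 1)).1 hf |>.2.2
  have hftc := exp_mul_sub_eq_integral (G := fun s => deriv f s + f s / 2)
    (fun s => (hf'.differentiable one_ne_zero s).hasDerivAt.add
      ((hf.differentiable two_ne_zero s).hasDerivAt.div_const 2))
    ((hf'.continuous_deriv le_rfl).add ((hf'.continuous).div_const 2)) (-1 / 2) s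
  have hφ_eq : ∫ t in (0 : ℝ)..s, exp (-1 / 2 * t) * ((deriv (deriv f) t + deriv f t / 2) +
      -1 / 2 * (deriv f t + f t / 2)) = ∫ t in (0 : ℝ)..s, exp (-t / 2) * h t := by
    refine intervalIntegral.integral_congr fun t ht => ?_
    rw [uIcc_of_le hs] at ht
    simp only [← hode t ht.1]
    ring_nf
  rw [hφ_eq, ← intervalIntegral.integral_Ioi_sub_Ioi hφ hs, show -1 / 2 * s = -s / 2 by ring]
    at hftc
  rw [asymptoticCoeff, integral_Ici_eq_integral_Ioi]
  linarith

lemma abs_sub_asymptoticCoeff_le {a K : ℝ} (ha : 0 < a)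
    (hbound : ∀ t ≥ 0, |exp (-t / 2) * h t| ≤ K * exp (-a * t)) :
    |f 0 - asymptoticCoeff f h| ≤ 3 / 2 * |f 0| + |deriv f 0| + K / a := by
  have htail : |∫ t in Ici (0 : ℝ), exp (-t / 2) * h t| ≤ K / a := by
    simpa [integral_Ici_eq_integral_Ioi] using
      norm_integral_Ioi_le_of_norm_le_exp (φ := fun t => exp (-t / 2) * h t) ha
        fun t ht => hbound t ht.le
  rw [show f 0 - asymptoticCoeff f h =
      1 / 2 * f 0 - deriv f 0 - ∫ t in Ici (0 : ℝ), exp (-t / 2) * h t by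
    rw [asymptoticCoeff]; ring]
  refine ((abs_sub _ _).trans (add_le_add_left (abs_sub _ _) _)).trans ?_
  rw [abs_mul, abs_of_pos (by norm_num : (0 : ℝ) < 1 / 2)]
  linarith [abs_nonneg (f 0)]

lemma abs_sub_asymptoticCoeff_mul_exp_half_le {a K r : ℝ} (ha : 0 < a) (hf : ContDiff ℝ 2 f)
    (hode : ∀ r ≥ 0, deriv (deriv f) r - 1 / 4 * f r = h r)
    (hφ : IntegrableOn (fun t => exp (-t / 2) * h t) (Ioi 0))
    (hbound : ∀ t ≥ 0, |exp (-t / 2) * h t| ≤ K * exp (-a * t)) (hr : 0 ≤ r) :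
    |f r - asymptoticCoeff f h * exp (r / 2)| ≤
      exp (-r / 2) * (|f 0 - asymptoticCoeff f h| +
        K / a * ∫ s in (0 : ℝ)..r, exp ((1 - a) * s)) := by
  rw [sub_mul_exp_half_eq (hf.of_le one_le_two) _ r, abs_mul, abs_of_pos (exp_pos _)]
  gcongr
  refine (abs_add_le _ _).trans (add_le_add le_rfl ?_)
  rw [← Real.norm_eq_abs, ← intervalIntegral.integral_const_mul]
  refine intervalIntegral.norm_integral_le_of_norm_le hr (ae_of_all _ fun s hs => ?_)
    (Continuous.intervalIntegrable (by fun_prop) _ _)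
  have hs0 : 0 ≤ s := hs.1.le
  have htail := norm_integral_Ioi_le_of_norm_le_exp (φ := fun t => exp (-t / 2) * h t) ha
    fun t (ht : s < t) => hbound t (hs0.trans ht.le)
  rw [show exp (s / 2) * (deriv f s + f s / 2) = exp s * (exp (-s / 2) * (deriv f s + f s / 2)) by
      rw [← mul_assoc, ← exp_add]; ring_nf,
    exp_neg_half_mul_deriv_add_half_eq hf hode hφ hs0]
  calc ‖exp s * (asymptoticCoeff f h - ∫ t in Ioi s, exp (-t / 2) * h t) -
        asymptoticCoeff f h * exp s‖
      = exp s * ‖∫ t in Ioi s, exp (-t / 2) * h t‖ := by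
        rw [show ∀ x y : ℝ, exp s * (y - x) - y * exp s = -(exp s * x) by intros; ring,
          norm_neg, norm_mul, Real.norm_of_nonneg (exp_pos _).le]
    _ ≤ exp s * (K / a * exp (-a * s)) := by gcongr
    _ = K / a * exp ((1 - a) * s) := by rw [mul_left_comm, ← exp_add]; ring_nf

end SecondOrderEquation

/-- The analytic core of Proposition 4.9 of the paper: if `f'' - (1/4) f = h` on `[0,∞)`
with `|h(r)| ≤ K e^{(2-m)r}`, `m > 3/2`, then `f(r) - α e^{r/2}` decays with explicit rate,
where `α = (1/2) f(0) + f'(0) + ∫₀^∞ e^{-s/2} h(s) ds`, with a constant depending only on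
`K`, `m`, `|f(0)|` and `|f'(0)|`. -/
theorem stmt6 (m K F0 F1 : ℝ) (hm : 3 / 2 < m) (hK : 0 < K) :
    ∃ c > (0:ℝ), ∀ f h : ℝ → ℝ, ContDiff ℝ 2 f → Continuous h →
      (∀ r ≥ (0:ℝ), |h r| ≤ K * Real.exp ((2 - m) * r)) →
      (∀ r ≥ (0:ℝ), deriv (deriv f) r - (1 / 4) * f r = h r) →
      |f 0| ≤ F0 → |deriv f 0| ≤ F1 →
      IntegrableOn (fun s => Real.exp (-s / 2) * h s) (Set.Ici (0:ℝ)) ∧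
      ∀ r ≥ (0:ℝ),
        |f r - (1 / 2 * f 0 + deriv f 0 + ∫ s in Set.Ici (0:ℝ), Real.exp (-s / 2) * h s) *
            Real.exp (r / 2)| ≤
          c * (if m < 5 / 2 then Real.exp ((2 - m) * r)
               else if m = 5 / 2 then (r + 1) * Real.exp (-r / 2)
               else Real.exp (-r / 2)) := by
  obtain ⟨D, hD, hrate⟩ := exists_exp_neg_half_mul_integral_exp_le_decayRate m
  have ha : 0 < m - 3 / 2 := by linarith
  set C := K / (m - 3 / 2)
  refine ⟨3 / 2 * |F0| + |F1| + C * (1 + D), by positivity,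
    fun f h hf hh hhb hode hF0 hF1 => ?_⟩
  have hbound : ∀ t ≥ 0, |exp (-t / 2) * h t| ≤ K * exp (-(m - 3 / 2) * t) := fun t ht => by
    rw [abs_mul, abs_of_pos (exp_pos _), show -(m - 3 / 2) * t = -t / 2 + (2 - m) * t by ring,
      exp_add]
    exact (mul_le_mul_of_nonneg_left (hhb t ht) (exp_pos _).le).trans_eq (by ring)
  have hint : IntegrableOn (fun t => exp (-t / 2) * h t) (Ioi 0) :=
    integrableOn_Ioi_of_norm_le_exp ha (by fun_prop) fun t ht => hbound t ht.le
  refine ⟨by rwa [integrableOn_Ici_iff_integrableOn_Ioi], fun r hr => ?_⟩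
  have hα : |f 0 - asymptoticCoeff f h| ≤ 3 / 2 * |F0| + |F1| + C :=
    (abs_sub_asymptoticCoeff_le ha hbound).trans
      (by linarith [le_abs_self F0, le_abs_self F1])
  have hmain := abs_sub_asymptoticCoeff_mul_exp_half_le ha hf hode hint hbound hr
  rw [show 1 - (m - 3 / 2) = 5 / 2 - m by ring] at hmain
  change _ ≤ _ * decayRate m r
  calc _ ≤ exp (-r / 2) * |f 0 - asymptoticCoeff f h| +
        C * (exp (-r / 2) * ∫ s in (0 : ℝ)..r, exp ((5 / 2 - m) * s)) :=
          hmain.trans_eq (by ring)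
    _ ≤ (3 / 2 * |F0| + |F1| + C) * decayRate m r + C * (D * decayRate m r) := by
        refine add_le_add ?_ (mul_le_mul_of_nonneg_left (hrate r hr) (by positivity))
        rw [mul_comm]
        exact mul_le_mul hα (exp_neg_half_le_decayRate m hr) (exp_pos _).le (by positivity)
    _ = _ := by ring
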